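/- Initial condition for the two-row integral: for N ≥ 2, Δ_t(z_1,…,z_N) · ∮∮ (w_2 − w_1)(t w_1 − t^{-1} w_2) φ_1(w_1) φ_2(w_2) dw_1 dw_2/(2πi)^2 = Δ_t(z_1, z_2) · Δ_t(z_3,…,z_N), where the double ∮ denotes the iterated sum of residues over the simple poles at w_1 = z_m and w_2 = z_m, m = 1,…,N. -/

import Mathlib

open MvPolynomial Finset

noncomputable section

/-- Variable set: `m+1` parameters (index `0` is the indeterminate `t`, the others are
extra invertible indeterminates such as `t^{u_k}`), `N` variables `z_0, …, z_{N-1}`,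
and `r` auxiliary variables `w_0, …, w_{r-1}`. -/
abbrev Var (m N r : ℕ) : Type := (Fin (m + 1) ⊕ Fin N) ⊕ Fin r

/-- The polynomial ring over `ℚ` on those variables. -/
abbrev PR (m N r : ℕ) : Type := MvPolynomial (Var m N r) ℚ

/-- The field of rational functions over `ℚ` in the parameters, the `z`'s and the `w`'s. -/
abbrev FF (m N r : ℕ) : Type := FractionRing (PR m N r)

variable (m N r : ℕ)

/-- The parameter with index `k` (so `pa m N r 0` is `t`). -/
def pa (k : Fin (m + 1)) : FF m N r :=
  algebraMap (PR m N r) (FF m N r) (X (Sum.inl (Sum.inl k)))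

/-- The indeterminate `t`. -/
def tt' : FF m N r := pa m N r 0

/-- The variable `z_k` (`0`-indexed; junk value `0` if `k ≥ N`). -/
def zn (k : ℕ) : FF m N r :=
  if h : k < N then algebraMap (PR m N r) (FF m N r) (X (Sum.inl (Sum.inr ⟨k, h⟩))) else 0

/-- The variable `w_k` (`0`-indexed; junk value `0` if `k ≥ r`). -/
def wv (k : ℕ) : FF m N r :=
  if h : k < r then algebraMap (PR m N r) (FF m N r) (X (Sum.inr ⟨k, h⟩)) else 0

/-- The field automorphism `s_i` exchanging `z_i` and `z_{i+1}` (identity if `i + 1 ≥ N`). -/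
def sw (i : ℕ) : FF m N r ≃+* FF m N r :=
  if h : i + 1 < N then
    IsFractionRing.ringEquivOfRingEquiv
      ((renameEquiv ℚ (Equiv.swap ((Sum.inl (Sum.inr (⟨i, Nat.lt_of_succ_lt h⟩ : Fin N))) : Var m N r)
          (Sum.inl (Sum.inr (⟨i + 1, h⟩ : Fin N))))).toRingEquiv)
  else RingEquiv.refl _

/-- The Hecke algebra generator `T_i` in the polynomial representation (`0`-indexed:
`T_i f = ((t z_i - t⁻¹ z_{i+1})/(z_i - z_{i+1})) (f - s_i f) - t⁻¹ f`). -/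
def TT (i : ℕ) (f : FF m N r) : FF m N r :=
  (tt' m N r * zn m N r i - (tt' m N r)⁻¹ * zn m N r (i + 1)) / (zn m N r i - zn m N r (i + 1)) *
      (f - sw m N r i f) - (tt' m N r)⁻¹ * f

/-- The `t`-number `[u] = (t^u - t^{-u})/(t - t⁻¹)`, where `a` stands for `t^u`. -/
def tnum (a : FF m N r) : FF m N r := (a - a⁻¹) / (tt' m N r - (tt' m N r)⁻¹)

/-- The Baxterised operator `T_i(u) = T_i + (t^{-u}/[u]) id`, where `a` stands for `t^u`. -/
def TB (i : ℕ) (a : FF m N r) (f : FF m N r) : FF m N r :=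
  TT m N r i f + a⁻¹ / tnum m N r a * f

/-- The `t`-Vandermonde `Δ_t(z_a, …, z_{b-1}) = ∏_{a ≤ i < j < b} (t z_i - t⁻¹ z_j)`. -/
def Delt (a b : ℕ) : FF m N r :=
  ∏ j ∈ Finset.Ico a b, ∏ i ∈ Finset.Ico a j,
    (tt' m N r * zn m N r i - (tt' m N r)⁻¹ * zn m N r j)

/-- The Bethe wave function `φ_i(w) = ∏_{k<i} (w - z_k)⁻¹ ∏_{i ≤ k < N} (t w - t⁻¹ z_k)⁻¹`. -/
def phiF (i : ℕ) (w : FF m N r) : FF m N r :=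
  (∏ k ∈ Finset.range i, (w - zn m N r k))⁻¹ *
    (∏ k ∈ Finset.Ico i N, (tt' m N r * w - (tt' m N r)⁻¹ * zn m N r k))⁻¹

/-- Substitution `w_k := a`, computed on the reduced numerator and denominator. -/
def subW (k : ℕ) (a : FF m N r) (F : FF m N r) : FF m N r :=
  if h : k < r then
    aeval (fun v : Var m N r =>
        if v = Sum.inr (⟨k, h⟩ : Fin r) then a else algebraMap (PR m N r) (FF m N r) (X v))
      (IsFractionRing.num (PR m N r) F) /
    aeval (fun v : Var m N r =>
        if v = Sum.inr (⟨k, h⟩ : Fin r) then a else algebraMap (PR m N r) (FF m N r) (X v))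
      ((IsFractionRing.den (PR m N r) F) : PR m N r)
  else F

/-- The residue in `w_k` at `a` of a function with at most a simple pole there:
`((w_k - a) F)|_{w_k = a}`. -/
def resW (k : ℕ) (a : FF m N r) (F : FF m N r) : FF m N r :=
  subW m N r k a ((wv m N r k - a) * F)

/-- The contour integral `∮ F dw_k/(2πi)`: the sum of the residues at `z_0, …, z_{N-1}`. -/
def cint (k : ℕ) (F : FF m N r) : FF m N r :=
  ∑ j ∈ Finset.range N, resW m N r k (zn m N r j) F

/-- The iterated contour integral `∮⋯∮ F dw_0 ⋯ dw_{r-1}`,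
evaluated one variable at a time (`w_0` first). -/
def iInt (F : FF m N r) : FF m N r :=
  (List.range r).foldl (fun G k => cint m N r k G) F

/-- The string of Baxterised operators
`rowOps e c tv = T_{e+c-1}(v+1) ∘ T_{e+c-2}(v+2) ∘ ⋯ ∘ T_e(v+c)` (with `tv = t^v`). -/
def rowOps (e : ℕ) : ℕ → FF m N r → FF m N r → FF m N r
  | 0, _, f => f
  | c + 1, tv, f => TB m N r (e + c) (tv * tt' m N r) (rowOps e c (tv * tt' m N r) f)

/-- Application of the operators of the `i`-th row (from the top) of a Young diagram,
boxes `(i,1), …, (i,c)`, the box `(i,j)` contributing `T_{n+j-i}(…)` (`1`-indexed, so the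
Baxterised operator with `0`-indexed label `n+j-i-1`), the box `(i,1)` acting first;
`lab i j` stands for `t` raised to the spectral parameter of box `(i,j)`. -/
def rowApply (n : ℕ) (lab : ℕ → ℕ → FF m N r) (i : ℕ) : ℕ → FF m N r → FF m N r
  | 0, f => f
  | j + 1, f => TB m N r (n + (j + 1) - i - 1) (lab i (j + 1)) (rowApply n lab i j f)

/-- Application of all box operators of the Young diagram of `lam` (row `i` from the top
having `lam (n-i)` boxes), the rows being applied from top to bottom. This realises the
product `∏_{(i,j) ∈ λ} T_{n+j-i}(…)` where the operator of box `(i,j)` acts before those of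
boxes `(i+1,j)` and `(i,j+1)`. -/
def boxApply (n : ℕ) (lam : ℕ → ℕ) (lab : ℕ → ℕ → FF m N r) : ℕ → FF m N r → FF m N r
  | 0, f => f
  | i + 1, f => rowApply m N r n lab (i + 1) (lam (n - (i + 1))) (boxApply n lam lab i f)

/-- `ΔΔ = Δ_t(z_1,…,z_n) Δ_t(z_{n+1},…,z_{2n})` (here `N = 2n`). -/
def DDl (n : ℕ) : FF m N r := Delt m N r 0 n * Delt m N r n (2 * n)

/-- The deformed specialised Macdonald polynomial `M_λ(u_1, …, u_{n-1})`:
the box `(i,j)` of `λ` contributes `T_{n+j-i}(u_{n-i} + n - i - j + 1)`;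
`tu k` stands for `t^{u_k}`. -/
def Mac (n : ℕ) (lam : ℕ → ℕ) (tu : ℕ → FF m N r) : FF m N r :=
  boxApply m N r n lam (fun i j => tu (n - i) * tt' m N r ^ (n - i - j + 1)) (n - 1)
    (DDl m N r n)

/-- The Kazhdan-Lusztig labels: `v_{ij} = max (v_{i+1,j}, v_{i,j+1}) + 1` for a box of `λ`,
and `0` outside of `λ` (computed with fuel). -/
def klv (n : ℕ) (lam : ℕ → ℕ) : ℕ → ℕ → ℕ → ℕ
  | 0, _, _ => 0
  | fuel + 1, i, j =>
      if 1 ≤ i ∧ i ≤ n - 1 ∧ 1 ≤ j ∧ j ≤ lam (n - i) then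
        max (klv n lam fuel (i + 1) j) (klv n lam fuel i (j + 1)) + 1
      else 0

/-- The Kazhdan-Lusztig label of box `(i,j)`. -/
def klLabel (n : ℕ) (lam : ℕ → ℕ) (i j : ℕ) : ℕ := klv n lam (2 * n) i j

/-- The Kazhdan-Lusztig element `KL_λ = (∏_{(i,j) ∈ λ} T_{n+j-i}(v_{ij})) ΔΔ`. -/
def KL (n : ℕ) (lam : ℕ → ℕ) : FF m N r :=
  boxApply m N r n lam (fun i j => tt' m N r ^ klLabel n lam i j) (n - 1) (DDl m N r n)

/-- Evaluation `z_1 = ⋯ = z_N = 1`, computed on the reduced numerator and denominator. -/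
def evalZ (F : FF m N r) : FF m N r :=
  aeval (fun v : Var m N r =>
      match v with
      | Sum.inl (Sum.inr _) => 1
      | v => algebraMap (PR m N r) (FF m N r) (X v))
    (IsFractionRing.num (PR m N r) F) /
  aeval (fun v : Var m N r =>
      match v with
      | Sum.inl (Sum.inr _) => 1
      | v => algebraMap (PR m N r) (FF m N r) (X v))
    ((IsFractionRing.den (PR m N r) F) : PR m N r)

variable {R : Type*} [CommRing R]

/-- The polynomial `∏_{k=0}^{n-1} (1 + y_k x_{k+1}) ∏_{1 ≤ i < j ≤ n} (x_j - x_i)(1 + x_i x_j + τ x_j)`. -/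
def Apoly (n : ℕ) (τ : R) (y : ℕ → R) : MvPolynomial (Fin n) R :=
  (∏ k : Fin n, (1 + MvPolynomial.C (y (k : ℕ)) * MvPolynomial.X k)) *
    ∏ p ∈ Finset.univ.filter (fun p : Fin n × Fin n => p.1 < p.2),
      (MvPolynomial.X p.2 - MvPolynomial.X p.1) *
        (1 + MvPolynomial.X p.1 * MvPolynomial.X p.2 + MvPolynomial.C τ * MvPolynomial.X p.2)

/-- The constant term
`A_{a_1,…,a_{n-1}}(τ, y_1, …, y_{n-1}) = CT(∏ (1 + y_k x_{k+1}) x_{k+1}^{-a_k+1} ∏_{i<j} (x_j-x_i)(1+x_i x_j+τ x_j))`,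
extracted as the coefficient of `∏ x_{k+1}^{a_k - 1}`. -/
def Act (n : ℕ) (τ : R) (y : ℕ → R) (a : ℕ → ℕ) : R :=
  MvPolynomial.coeff (Finsupp.equivFunOnFinite.symm fun k : Fin n => a (k : ℕ) - 1)
    (Apoly n τ y)

/-- The TSSCPP constant term
`N(t_0,…,t_{n-1}) = CT(∏_{i<j} (x_j-x_i)(1+t_i x_j)/(1-x_i x_j) ∏_i (1+t_0 x_i) x_i^{-2i+2}/(1-x_i²))`. -/
def Nct (n : ℕ) (tv : ℕ → R) : R :=
  MvPowerSeries.coeff (R := R) (Finsupp.equivFunOnFinite.symm fun k : Fin n => 2 * (k : ℕ))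
    ((∏ p ∈ Finset.univ.filter (fun p : Fin n × Fin n => p.1 < p.2),
        ((MvPowerSeries.X p.2 - MvPowerSeries.X p.1) *
          (1 + MvPowerSeries.C (σ := Fin n) (R := R) (tv ((p.1 : ℕ) + 1)) * MvPowerSeries.X p.2) *
          MvPowerSeries.invOfUnit (1 - MvPowerSeries.X p.1 * MvPowerSeries.X p.2) 1)) *
      ∏ k : Fin n,
        ((1 + MvPowerSeries.C (σ := Fin n) (R := R) (tv 0) * MvPowerSeries.X k) *
          MvPowerSeries.invOfUnit (1 - MvPowerSeries.X k ^ 2) 1))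


/-
In `w₁` the integrand has a single simple pole among the `z`'s, at `z_1`, since `φ_1` has only one
factor of the form `(w - z)⁻¹`. The residue there carries the factor `w₂ - z_1`, which cancels the
pole of `φ_2(w₂)` at `z_1` and leaves a single simple pole at `w₂ = z_2`. The double residue is
`Δ_t(z_1, z_2) / (∏_{k ≥ 2} (t z_1 - t⁻¹ z_k) ∏_{k ≥ 3} (t z_2 - t⁻¹ z_k))`, and these two
products are exactly the factors of `Δ_t(z_1, …, z_N)` missing from `Δ_t(z_3, …, z_N)`.

Since `subW` substitutes into the *reduced* numerator and denominator, a residue is evaluated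
through any fraction representation whose denominator survives the substitution (`HasSubst`); on
such fractions substitution is a ring homomorphism, so values can be computed factor by factor.
-/

variable {m N r}

abbrev ofPoly : PR m N r →+* FF m N r := algebraMap _ _

theorem tt'_eq_ofPoly_X : tt' m N r = ofPoly (X (Sum.inl (Sum.inl 0))) := rfl

theorem zn_eq_ofPoly_X {i : ℕ} (hi : i < N) :
    zn m N r i = ofPoly (X (Sum.inl (Sum.inr ⟨i, hi⟩))) :=
  dif_pos hi

theorem wv_eq_ofPoly_X {k : ℕ} (hk : k < r) : wv m N r k = ofPoly (X (Sum.inr ⟨k, hk⟩)) :=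
  dif_pos hk

theorem tt'_ne_zero : tt' m N r ≠ 0 := by
  rw [tt'_eq_ofPoly_X, map_ne_zero_iff _ (IsFractionRing.injective _ _)]
  exact X_ne_zero _

theorem ofPoly_X_sub_ofPoly_X_ne_zero {u v : Var m N r} (huv : u ≠ v) :
    ofPoly (X u) - ofPoly (X v) ≠ 0 := by
  rw [← map_sub, map_ne_zero_iff _ (IsFractionRing.injective _ _), sub_ne_zero]
  exact (X_injective (σ := Var m N r) (R := ℚ)).ne huv

theorem tt'_mul_sub_inv_mul_ne_zero (u v : Var m N r) :
    tt' m N r * ofPoly (X u) - (tt' m N r)⁻¹ * ofPoly (X v) ≠ 0 := by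
  -- after multiplying by `t`, evaluate at `t = 2` and all other variables `1`
  have hpoly : (X (Sum.inl (Sum.inl 0)) ^ 2 * X u - X v : PR m N r) ≠ 0 := by
    intro h
    have := congrArg (eval fun w => if w = Sum.inl (Sum.inl 0) then (2 : ℚ) else 1) h
    simp only [eval_sub, eval_mul, eval_pow, eval_X, map_zero] at this
    split_ifs at this <;> norm_num at this
  have key : ofPoly (X (Sum.inl (Sum.inl 0)) ^ 2 * X u - X v) =
      tt' m N r * (tt' m N r * ofPoly (X u) - (tt' m N r)⁻¹ * ofPoly (X v)) := by
    simp only [map_sub, map_mul, map_pow, ← tt'_eq_ofPoly_X]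
    field_simp [tt'_ne_zero]
  intro h
  rw [h, mul_zero, map_eq_zero_iff _ (IsFractionRing.injective _ _)] at key
  exact hpoly key

theorem zn_sub_zn_ne_zero {i j : ℕ} (hi : i < N) (hj : j < N) (hij : i ≠ j) :
    zn m N r i - zn m N r j ≠ 0 := by
  rw [zn_eq_ofPoly_X hi, zn_eq_ofPoly_X hj]
  exact ofPoly_X_sub_ofPoly_X_ne_zero (by simpa using hij)

theorem wv_sub_zn_ne_zero {k j : ℕ} (hk : k < r) (hj : j < N) : wv m N r k - zn m N r j ≠ 0 := by
  rw [wv_eq_ofPoly_X hk, zn_eq_ofPoly_X hj]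
  exact ofPoly_X_sub_ofPoly_X_ne_zero (by simp)

theorem tt'_mul_zn_sub_ne_zero {i j : ℕ} (hi : i < N) (hj : j < N) :
    tt' m N r * zn m N r i - (tt' m N r)⁻¹ * zn m N r j ≠ 0 := by
  rw [zn_eq_ofPoly_X hi, zn_eq_ofPoly_X hj]
  exact tt'_mul_sub_inv_mul_ne_zero _ _

theorem tt'_mul_wv_sub_ne_zero {k j : ℕ} (hk : k < r) (hj : j < N) :
    tt' m N r * wv m N r k - (tt' m N r)⁻¹ * zn m N r j ≠ 0 := by
  rw [wv_eq_ofPoly_X hk, zn_eq_ofPoly_X hj]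
  exact tt'_mul_sub_inv_mul_ne_zero _ _

def substAt (k : ℕ) (a : FF m N r) : PR m N r →ₐ[ℚ] FF m N r :=
  aeval (Sum.elim (fun u => ofPoly (X (Sum.inl u)))
    (fun i => if (i : ℕ) = k then a else ofPoly (X (Sum.inr i))))

theorem substAt_X_inl (k : ℕ) (a : FF m N r) (u : Fin (m + 1) ⊕ Fin N) :
    substAt k a (X (Sum.inl u)) = ofPoly (X (Sum.inl u)) := by
  simp [substAt]

theorem substAt_X_inr (k : ℕ) (a : FF m N r) (i : Fin r) :
    substAt k a (X (Sum.inr i)) =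
      if (i : ℕ) = k then a else ofPoly (X (Sum.inr i)) := by
  simp [substAt]

theorem aeval_ite_eq_substAt {k : ℕ} (hk : k < r) (a : FF m N r) :
    aeval (fun v : Var m N r =>
        if v = Sum.inr (⟨k, hk⟩ : Fin r) then a else ofPoly (X v)) =
      substAt k a := by
  rw [substAt]
  congr 1
  funext v
  rcases v with u | i
  · simp
  · simp [Fin.ext_iff]

theorem subW_mul_substAt {k : ℕ} (hk : k < r) {a x : FF m N r} {p q : PR m N r}
    (hq : substAt k a q ≠ 0) (hx : x * ofPoly q = ofPoly p) :
    subW m N r k a x * substAt k a q = substAt k a p := by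
  set n := IsFractionRing.num (PR m N r) x
  set d := (IsFractionRing.den (PR m N r) x : PR m N r)
  have hd : ofPoly d ≠ 0 :=
    IsFractionRing.to_map_ne_zero_of_mem_nonZeroDivisors (IsFractionRing.den _ x).2
  have hxd : x = ofPoly n / ofPoly d := (IsFractionRing.mk'_num_den' _ x).symm
  have cross : n * q = p * d := by
    apply IsFractionRing.injective (PR m N r) (FF m N r)
    rw [map_mul, map_mul, ← hx, hxd]
    field_simp
  have hdq : d ∣ q :=
    (IsFractionRing.num_den_reduced _ x).symm.dvd_of_dvd_mul_left ⟨p, by rw [cross, mul_comm]⟩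
  have hψd : substAt k a d ≠ 0 := by
    obtain ⟨c, rfl⟩ := hdq
    exact left_ne_zero_of_mul (by rwa [map_mul] at hq)
  rw [subW, dif_pos hk, aeval_ite_eq_substAt hk, div_mul_eq_mul_div, div_eq_iff hψd,
    ← map_mul, ← map_mul, cross]

/-- `x` is a quotient of polynomials whose denominator does not vanish at `w_k = a`, and `v` is
its value there. -/
def HasSubst (k : ℕ) (a x v : FF m N r) : Prop :=
  ∃ p q : PR m N r, substAt k a q ≠ 0 ∧ x * ofPoly q = ofPoly p ∧ v * substAt k a q = substAt k a p

namespace HasSubst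

variable {k : ℕ} {a x y u v : FF m N r}

theorem subW_eq (hk : k < r) (h : HasSubst k a x v) : subW m N r k a x = v := by
  obtain ⟨p, q, hq, hx, hv⟩ := h
  exact mul_right_cancel₀ hq ((subW_mul_substAt hk hq hx).trans hv.symm)

theorem _root_.hasSubst_ofPoly (p : PR m N r) : HasSubst k a (ofPoly p) (substAt k a p) :=
  ⟨p, 1, by simp, by simp, by simp⟩

theorem mul (hx : HasSubst k a x u) (hy : HasSubst k a y v) : HasSubst k a (x * y) (u * v) := by
  obtain ⟨p, q, hq, hx, hu⟩ := hx
  obtain ⟨p', q', hq', hy, hv⟩ := hy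
  refine ⟨p * p', q * q', by simpa using mul_ne_zero hq hq', ?_, ?_⟩
  · simp only [map_mul, ← hx, ← hy]; ring
  · simp only [map_mul, ← hu, ← hv]; ring

theorem sub (hx : HasSubst k a x u) (hy : HasSubst k a y v) : HasSubst k a (x - y) (u - v) := by
  obtain ⟨p, q, hq, hx, hu⟩ := hx
  obtain ⟨p', q', hq', hy, hv⟩ := hy
  refine ⟨p * q' - p' * q, q * q', by simpa using mul_ne_zero hq hq', ?_, ?_⟩
  · simp only [map_mul, map_sub, ← hx, ← hy]; ring
  · simp only [map_mul, map_sub, ← hu, ← hv]; ring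

theorem inv (hx : HasSubst k a x v) (hv : v ≠ 0) : HasSubst k a x⁻¹ v⁻¹ := by
  obtain ⟨p, q, hq, hx, hvq⟩ := hx
  have hp : substAt k a p ≠ 0 := hvq ▸ mul_ne_zero hv hq
  have hx0 : x ≠ 0 := by
    rintro rfl
    rw [zero_mul, eq_comm, map_eq_zero_iff _ (IsFractionRing.injective _ _)] at hx
    exact hp (by rw [hx, map_zero])
  refine ⟨q, p, hp, ?_, ?_⟩
  · rw [← hx, inv_mul_cancel_left₀ hx0]
  · rw [← hvq, inv_mul_cancel_left₀ hv]

theorem div (hx : HasSubst k a x u) (hy : HasSubst k a y v) (hv : v ≠ 0) :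
    HasSubst k a (x / y) (u / v) :=
  hx.mul (hy.inv hv)

theorem prod {ι : Type*} {s : Finset ι} {f g : ι → FF m N r}
    (h : ∀ i ∈ s, HasSubst k a (f i) (g i)) : HasSubst k a (∏ i ∈ s, f i) (∏ i ∈ s, g i) := by
  classical
  induction s using Finset.induction_on with
  | empty => simpa using hasSubst_ofPoly (k := k) (a := a) 1
  | insert i s hi ih =>
    rw [prod_insert hi, prod_insert hi]
    exact (h i (mem_insert_self i s)).mul (ih fun j hj => h j (mem_insert_of_mem hj))

end HasSubst

section

variable {k : ℕ} {a x y u v : FF m N r}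

theorem hasSubst_tt' : HasSubst k a (tt' m N r) (tt' m N r) := by
  have h := hasSubst_ofPoly (k := k) (a := a) (X (Sum.inl (Sum.inl 0)))
  rwa [substAt_X_inl] at h

theorem hasSubst_zn (i : ℕ) : HasSubst k a (zn m N r i) (zn m N r i) := by
  by_cases hi : i < N
  · have h := hasSubst_ofPoly (k := k) (a := a) (X (Sum.inl (Sum.inr ⟨i, hi⟩)))
    rwa [substAt_X_inl, ← zn_eq_ofPoly_X hi] at h
  · rw [zn, dif_neg hi]
    simpa using hasSubst_ofPoly (k := k) (a := a) 0

theorem hasSubst_wv_self (hk : k < r) : HasSubst k a (wv m N r k) a := by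
  have h := hasSubst_ofPoly (k := k) (a := a) (X (Sum.inr ⟨k, hk⟩))
  rwa [substAt_X_inr, if_pos rfl, ← wv_eq_ofPoly_X hk] at h

theorem hasSubst_wv_of_ne {k' : ℕ} (hk' : k' ≠ k) : HasSubst k a (wv m N r k') (wv m N r k') := by
  by_cases hk'r : k' < r
  · have h := hasSubst_ofPoly (k := k) (a := a) (X (Sum.inr ⟨k', hk'r⟩))
    rwa [substAt_X_inr, if_neg hk', ← wv_eq_ofPoly_X hk'r] at h
  · rw [wv, dif_neg hk'r]
    simpa using hasSubst_ofPoly (k := k) (a := a) 0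

theorem HasSubst.tt'_mul_sub (hx : HasSubst k a x u) (hy : HasSubst k a y v) :
    HasSubst k a (tt' m N r * x - (tt' m N r)⁻¹ * y)
      (tt' m N r * u - (tt' m N r)⁻¹ * v) :=
  (hasSubst_tt'.mul hx).sub ((hasSubst_tt'.inv tt'_ne_zero).mul hy)

theorem HasSubst.phiF {w : FF m N r} {i : ℕ} (hw : HasSubst k a w v)
    (hv : ∀ j < i, v - zn m N r j ≠ 0)
    (hv' : ∀ j ∈ Ico i N, tt' m N r * v - (tt' m N r)⁻¹ * zn m N r j ≠ 0) :
    HasSubst k a (phiF m N r i w) (phiF m N r i v) :=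
  ((HasSubst.prod fun j _ => hw.sub (hasSubst_zn j)).inv
      (prod_ne_zero_iff.2 fun j hj => hv j (mem_range.1 hj))).mul
    ((HasSubst.prod fun j _ => hw.tt'_mul_sub (hasSubst_zn j)).inv (prod_ne_zero_iff.2 hv'))

end

theorem cint_eq_of_simple_pole {k j₀ : ℕ} (hk : k < r) (hj₀ : j₀ < N) {F G : FF m N r}
    {g : ℕ → FF m N r} (hF : F = G / (wv m N r k - zn m N r j₀))
    (hG : ∀ j < N, HasSubst k (zn m N r j) G (g j)) :
    cint m N r k F = g j₀ := by
  rw [cint, sum_eq_single_of_mem j₀ (mem_range.2 hj₀)]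
  · rw [resW, hF, mul_div_cancel₀ _ (wv_sub_zn_ne_zero hk hj₀)]
    exact (hG j₀ hj₀).subW_eq hk
  · intro j hj hne
    have hj := mem_range.1 hj
    have h := ((hasSubst_wv_self hk).sub (hasSubst_zn j)).mul
      ((hG j hj).div ((hasSubst_wv_self hk).sub (hasSubst_zn j₀)) (zn_sub_zn_ne_zero hj hj₀ hne))
    rw [resW, hF, h.subW_eq hk, sub_self, zero_mul]

theorem Delt_eq_prod_mul_Delt_succ (a b : ℕ) :
    Delt m N r a b =
      (∏ j ∈ Ico (a + 1) b, (tt' m N r * zn m N r a - (tt' m N r)⁻¹ * zn m N r j)) *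
        Delt m N r (a + 1) b := by
  rcases lt_or_ge a b with hab | hba
  · rw [Delt, Delt, prod_eq_prod_Ico_succ_bot hab, Ico_self, prod_empty, one_mul,
      ← prod_mul_distrib]
    refine prod_congr rfl fun j hj => ?_
    rw [prod_eq_prod_Ico_succ_bot (mem_Ico.1 hj).1]
  · simp [Delt, Ico_eq_empty_of_le hba, Ico_eq_empty_of_le (hba.trans (Nat.le_succ a))]

theorem Delt_zero_two : Delt m N r 0 2 = tt' m N r * zn m N r 0 - (tt' m N r)⁻¹ * zn m N r 1 := by
  simp [Delt, prod_range_succ]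

theorem iInt_two (F : FF m N 2) : iInt m N 2 F = cint m N 2 1 (cint m N 2 0 F) := rfl

theorem cint_zero_two_row_integrand (hN : 2 ≤ N) (hr : 2 ≤ r) :
    cint m N r 0 ((wv m N r 1 - wv m N r 0) *
        (tt' m N r * wv m N r 0 - (tt' m N r)⁻¹ * wv m N r 1) *
        phiF m N r 1 (wv m N r 0) * phiF m N r 2 (wv m N r 1)) =
      (wv m N r 1 - zn m N r 0) * (tt' m N r * zn m N r 0 - (tt' m N r)⁻¹ * wv m N r 1) *
        (∏ j ∈ Ico 1 N, (tt' m N r * zn m N r 0 - (tt' m N r)⁻¹ * zn m N r j))⁻¹ *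
        phiF m N r 2 (wv m N r 1) := by
  refine cint_eq_of_simple_pole (by omega) (by omega)
    (G := (wv m N r 1 - wv m N r 0) * (tt' m N r * wv m N r 0 - (tt' m N r)⁻¹ * wv m N r 1) *
      (∏ j ∈ Ico 1 N, (tt' m N r * wv m N r 0 - (tt' m N r)⁻¹ * zn m N r j))⁻¹ *
      phiF m N r 2 (wv m N r 1))
    (g := fun i => (wv m N r 1 - zn m N r i) *
      (tt' m N r * zn m N r i - (tt' m N r)⁻¹ * wv m N r 1) *
      (∏ j ∈ Ico 1 N, (tt' m N r * zn m N r i - (tt' m N r)⁻¹ * zn m N r j))⁻¹ *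
      phiF m N r 2 (wv m N r 1)) ?_ ?_
  · simp only [phiF, prod_range_one]
    ring
  · intro i hi
    have hw0 := hasSubst_wv_self (a := zn m N r i) (by omega : 0 < r)
    have hw1 := hasSubst_wv_of_ne (k := 0) (a := zn m N r i) (r := r) one_ne_zero
    have hφ := hw1.phiF (i := 2) (fun j hj => wv_sub_zn_ne_zero (by omega) (by omega))
      fun j hj => tt'_mul_wv_sub_ne_zero (by omega) (mem_Ico.1 hj).2
    have hprod := (HasSubst.prod (s := Ico 1 N) fun j _ => hw0.tt'_mul_sub (hasSubst_zn j)).inv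
      (prod_ne_zero_iff.2 fun j hj => tt'_mul_zn_sub_ne_zero hi (mem_Ico.1 hj).2)
    exact (((hw1.sub hw0).mul (hw0.tt'_mul_sub hw1)).mul hprod).mul hφ

theorem cint_one_two_row_residue (hN : 2 ≤ N) (hr : 2 ≤ r) :
    cint m N r 1 ((wv m N r 1 - zn m N r 0) *
        (tt' m N r * zn m N r 0 - (tt' m N r)⁻¹ * wv m N r 1) *
        (∏ j ∈ Ico 1 N, (tt' m N r * zn m N r 0 - (tt' m N r)⁻¹ * zn m N r j))⁻¹ *
        phiF m N r 2 (wv m N r 1)) =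
      (tt' m N r * zn m N r 0 - (tt' m N r)⁻¹ * zn m N r 1) *
        (∏ j ∈ Ico 1 N, (tt' m N r * zn m N r 0 - (tt' m N r)⁻¹ * zn m N r j))⁻¹ *
        (∏ j ∈ Ico 2 N, (tt' m N r * zn m N r 1 - (tt' m N r)⁻¹ * zn m N r j))⁻¹ := by
  refine cint_eq_of_simple_pole (by omega) (by omega)
    (G := (tt' m N r * zn m N r 0 - (tt' m N r)⁻¹ * wv m N r 1) *
      (∏ j ∈ Ico 1 N, (tt' m N r * zn m N r 0 - (tt' m N r)⁻¹ * zn m N r j))⁻¹ *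
      (∏ j ∈ Ico 2 N, (tt' m N r * wv m N r 1 - (tt' m N r)⁻¹ * zn m N r j))⁻¹)
    (g := fun i => (tt' m N r * zn m N r 0 - (tt' m N r)⁻¹ * zn m N r i) *
      (∏ j ∈ Ico 1 N, (tt' m N r * zn m N r 0 - (tt' m N r)⁻¹ * zn m N r j))⁻¹ *
      (∏ j ∈ Ico 2 N, (tt' m N r * zn m N r i - (tt' m N r)⁻¹ * zn m N r j))⁻¹) ?_ ?_
  · have h0 := wv_sub_zn_ne_zero (m := m) (show 1 < r by omega) (show 0 < N by omega)
    simp only [phiF, prod_range_succ, prod_range_zero, one_mul]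
    field_simp
  · intro i hi
    have hw1 := hasSubst_wv_self (a := zn m N r i) (by omega : 1 < r)
    have hz0 : HasSubst 1 (zn m N r i) (zn m N r 0) (zn m N r 0) := hasSubst_zn 0
    have hc := (HasSubst.prod (s := Ico 1 N) fun j _ => hz0.tt'_mul_sub (hasSubst_zn j)).inv
      (prod_ne_zero_iff.2 fun j hj => tt'_mul_zn_sub_ne_zero (by omega) (mem_Ico.1 hj).2)
    have hprod := (HasSubst.prod (s := Ico 2 N) fun j _ => hw1.tt'_mul_sub (hasSubst_zn j)).inv
      (prod_ne_zero_iff.2 fun j hj => tt'_mul_zn_sub_ne_zero hi (mem_Ico.1 hj).2)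
    exact ((hz0.tt'_mul_sub hw1).mul hc).mul hprod

/-- initial condition for the two-row integral.  With `w_1 = wv 0 N 2 0`
and `w_2 = wv 0 N 2 1`, and the double contour integral `iInt` being the iterated sum of
residues at `w_1 = z_m`, then `w_2 = z_m`, `m = 1, …, N`:
`Δ_t(z_1,…,z_N) ∮∮ (w_2-w_1)(t w_1 - t⁻¹ w_2) φ_1(w_1) φ_2(w_2) dw_1 dw_2/(2πi)²
  = Δ_t(z_1, z_2) Δ_t(z_3,…,z_N)`. -/
theorem two_row_initial (N : ℕ) (hN : 2 ≤ N) :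
    Delt 0 N 2 0 N *
        iInt 0 N 2
          ((wv 0 N 2 1 - wv 0 N 2 0) *
            (tt' 0 N 2 * wv 0 N 2 0 - (tt' 0 N 2)⁻¹ * wv 0 N 2 1) *
            phiF 0 N 2 1 (wv 0 N 2 0) * phiF 0 N 2 2 (wv 0 N 2 1)) =
      Delt 0 N 2 0 2 * Delt 0 N 2 2 N := by
  rw [iInt_two, cint_zero_two_row_integrand hN le_rfl, cint_one_two_row_residue hN le_rfl,
    Delt_eq_prod_mul_Delt_succ 0 N, Delt_eq_prod_mul_Delt_succ 1 N, Delt_zero_two]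
  have hA : ∏ j ∈ Ico 1 N, (tt' 0 N 2 * zn 0 N 2 0 - (tt' 0 N 2)⁻¹ * zn 0 N 2 j) ≠ 0 :=
    prod_ne_zero_iff.2 fun j hj => tt'_mul_zn_sub_ne_zero (by omega) (mem_Ico.1 hj).2
  have hB : ∏ j ∈ Ico 2 N, (tt' 0 N 2 * zn 0 N 2 1 - (tt' 0 N 2)⁻¹ * zn 0 N 2 j) ≠ 0 :=
    prod_ne_zero_iff.2 fun j hj => tt'_mul_zn_sub_ne_zero (by omega) (mem_Ico.1 hj).2
  generalize (∏ j ∈ Ico 1 N, (tt' 0 N 2 * zn 0 N 2 0 - (tt' 0 N 2)⁻¹ * zn 0 N 2 j)) = A at hA ⊢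
  generalize (∏ j ∈ Ico 2 N, (tt' 0 N 2 * zn 0 N 2 1 - (tt' 0 N 2)⁻¹ * zn 0 N 2 j)) = B at hB ⊢
  field_simp

end
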